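/- arXiv:math/0607548 — 2 statements merged into one kernel-verified Lean document; each statement's English description precedes it below -/
import Mathlib

section
/- For a spectral measure P on a separable Hilbert space H, there exists a vector g ∈ H of maximal type, i.e., such that for every f ∈ H the measure μ_f(E) = ⟨f, P(E)f⟩ is absolutely continuous with respect to μ_g(E) = ⟨g, P(E)g⟩. -/
open MeasureTheory Filter Topology
open scoped ENNReal

/-- A spectral measure on a Hilbert space `H` over the measurable space `Λ`:
a projection-valued, strongly countably additive, complete set function. -/
structure SpectralMeasure (Λ H : Type*) [MeasurableSpace Λ]
    [NormedAddCommGroup H] [InnerProductSpace ℂ H] [CompleteSpace H] where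
  P : Set Λ → (H →L[ℂ] H)
  selfAdjoint : ∀ E x y, (inner ℂ (P E x) y : ℂ) = inner ℂ x (P E y)
  idem : ∀ E, P E ∘L P E = P E
  complete : P Set.univ = ContinuousLinearMap.id ℂ H
  countablyAdditive : ∀ E : ℕ → Set Λ, (∀ n, MeasurableSet (E n)) →
    Pairwise (Function.onFun Disjoint E) →
    ∀ x : H, HasSum (fun n => P (E n) x) (P (⋃ n, E n) x)

variable {Λ H : Type*} [MeasurableSpace Λ] [NormedAddCommGroup H]
  [InnerProductSpace ℂ H] [CompleteSpace H]

/-- The cyclic subspace `H_g`: closure of the span of `{P(E) g : E measurable}`. -/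
noncomputable def cyclicSubspace (P : SpectralMeasure Λ H) (g : H) : Submodule ℂ H :=
  (Submodule.span ℂ {x : H | ∃ E : Set Λ, MeasurableSet E ∧ x = P.P E g}).topologicalClosure

/-- `v = J_φ f`, the spectral integral of `φ` applied to `f`, characterized by
`v ∈ H_f` and `⟪P(E) f, v⟫ = ∫_E φ dμ_f` for every measurable `E`.
Here `ν f` is assumed to be the diagonal measure `μ_f(E) = ⟪f, P(E) f⟫`. -/
def IsSpectralIntegralAt (P : SpectralMeasure Λ H) (ν : H → Measure Λ)
    (φ : Λ → ℂ) (f v : H) : Prop :=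
  v ∈ cyclicSubspace P f ∧
    ∀ E : Set Λ, MeasurableSet E → (inner ℂ (P.P E f) v : ℂ) = ∫ l in E, φ l ∂(ν f)

/-! For measurable `E`, `μ_f(E) = ‖P(E) f‖²`, so it suffices to find `g` with `P(E) g = 0 → P(E) = 0`.
Orthogonalize a dense sequence `(x n)` against the closed `P`-invariant subspaces `M n` generated
by `x 0, …, x (n-1)`: `y n := x n - (projection of x n onto M n)`. Then `P(E) (y m) ⊥ P(F) (y n)`
for `m ≠ n`, so for `g = ∑ c n • y n` with all `c n ≠ 0`, `P(E) g = 0` forces every `P(E) (y n)`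
to vanish; by induction every `P(E) (x n)` vanishes, and `P(E) = 0` by density. -/

theorem exists_ne_zero_summable_smul {𝕜 E : Type*} [NontriviallyNormedField 𝕜]
    [NormedAddCommGroup E] [NormedSpace 𝕜 E] [CompleteSpace E] (y : ℕ → E) :
    ∃ c : ℕ → 𝕜, (∀ n, c n ≠ 0) ∧ Summable fun n => c n • y n := by
  have hr : ∀ n : ℕ, 0 < (1 / 2 : ℝ) ^ n / (1 + ‖y n‖) := fun n => by positivity
  choose c hc_pos hc_lt using fun n => NormedField.exists_norm_lt 𝕜 (hr n)
  refine ⟨c, fun n => norm_pos_iff.mp (hc_pos n), ?_⟩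
  refine Summable.of_norm_bounded summable_geometric_two fun n => ?_
  calc ‖c n • y n‖ = ‖c n‖ * ‖y n‖ := norm_smul _ _
    _ ≤ (1 / 2) ^ n / (1 + ‖y n‖) * (1 + ‖y n‖) := by gcongr; exact (hc_lt n).le; linarith
    _ = (1 / 2) ^ n := div_mul_cancel₀ _ (by positivity)

theorem eq_zero_of_hasSum_smul_eq_zero_of_pairwise_inner {ι 𝕜 E : Type*} [RCLike 𝕜]
    [NormedAddCommGroup E] [InnerProductSpace 𝕜 E] {z : ι → E} {c : ι → 𝕜}
    (horth : Pairwise fun m n => inner 𝕜 (z m) (z n) = 0) (hc : ∀ n, c n ≠ 0)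
    (hsum : HasSum (fun n => c n • z n) 0) (m : ι) : z m = 0 := by
  have hinner := (innerSL 𝕜 (z m)).hasSum hsum
  simp only [innerSL_apply_apply, inner_smul_right, map_zero] at hinner
  have hsingle : HasSum (fun n => c n * inner 𝕜 (z m) (z n)) (c m * inner 𝕜 (z m) (z m)) :=
    hasSum_single m fun n hn => by rw [horth hn.symm, mul_zero]
  have := hsingle.unique hinner
  rwa [mul_eq_zero, or_iff_right (hc m), inner_self_eq_zero] at this

namespace SpectralMeasure

variable (P : SpectralMeasure Λ H)

theorem apply_empty : P.P ∅ = 0 := by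
  ext x
  have h := P.countablyAdditive (fun _ => ∅) (fun _ => .empty) (fun _ _ _ => disjoint_bot_left) x
  rw [Set.iUnion_empty] at h
  exact tendsto_nhds_unique tendsto_const_nhds h.summable.tendsto_atTop_zero

open Classical in
noncomputable def toVectorMeasure (x : H) : VectorMeasure Λ H where
  measureOf' E := if MeasurableSet E then P.P E x else 0
  empty' := by simp [apply_empty]
  not_measurable' _ hE := if_neg hE
  m_iUnion' E hE hdisj := by
    simpa only [hE, MeasurableSet.iUnion hE, if_true] using P.countablyAdditive E hE hdisj x

variable {P}

theorem apply_union {E F : Set Λ} (hE : MeasurableSet E) (hF : MeasurableSet F)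
    (hEF : Disjoint E F) : P.P (E ∪ F) = P.P E + P.P F := by
  ext x
  have h := (P.toVectorMeasure x).of_union hEF hE hF
  simpa [toVectorMeasure, hE, hF, hE.union hF] using h

theorem isIdempotentElem (E : Set Λ) : IsIdempotentElem (P.P E) := P.idem E

theorem mul_eq_zero_of_disjoint {E F : Set Λ} (hE : MeasurableSet E) (hF : MeasurableSet F)
    (hEF : Disjoint E F) : P.P E * P.P F = 0 := by
  have : IsAddTorsionFree (H →L[ℂ] H) := .of_isTorsionFree ℂ _
  have hunion := P.isIdempotentElem (E ∪ F)
  rw [apply_union hE hF hEF, (P.isIdempotentElem E).add_iff (P.isIdempotentElem F)] at hunion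
  exact (P.isIdempotentElem E).mul_eq_zero_of_anticommute hunion

theorem mul_eq_inter {E F : Set Λ} (hE : MeasurableSet E) (hF : MeasurableSet F) :
    P.P E * P.P F = P.P (E ∩ F) := by
  have hEsplit : P.P E = P.P (E ∩ F) + P.P (E \ F) := by
    rw [← apply_union (hE.inter hF) (hE.diff hF) (by tauto_set), Set.inter_union_sdiff]
  have hFsplit : P.P F = P.P (E ∩ F) + P.P (F \ E) := by
    rw [← apply_union (hE.inter hF) (hF.diff hE) (by tauto_set), Set.inter_comm,
      Set.inter_union_sdiff]
  rw [hEsplit, hFsplit, add_mul, mul_add, mul_add, (P.isIdempotentElem _).eq,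
    mul_eq_zero_of_disjoint (hE.inter hF) (hF.diff hE) (by tauto_set),
    mul_eq_zero_of_disjoint (hE.diff hF) (hE.inter hF) (by tauto_set),
    mul_eq_zero_of_disjoint (hE.diff hF) (hF.diff hE) (by tauto_set), add_zero, add_zero, add_zero]

theorem apply_apply {E F : Set Λ} (hE : MeasurableSet E) (hF : MeasurableSet F) (x : H) :
    P.P E (P.P F x) = P.P (E ∩ F) x :=
  DFunLike.congr_fun (mul_eq_inter hE hF) x

theorem apply_apply_self (E : Set Λ) (x : H) : P.P E (P.P E x) = P.P E x :=
  DFunLike.congr_fun (P.idem E) x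

theorem re_inner_self_apply (E : Set Λ) (x : H) :
    (inner ℂ x (P.P E x) : ℂ).re = ‖P.P E x‖ ^ 2 := by
  rw [← apply_apply_self, ← P.selfAdjoint, apply_apply_self, inner_self_eq_norm_sq_to_K]
  norm_cast

variable (P) in
noncomputable def cyclicSpan (s : Set H) : Submodule ℂ H :=
  (Submodule.span ℂ
    (Set.image2 (fun E v => P.P E v) {E : Set Λ | MeasurableSet E} s)).topologicalClosure

variable {s t : Set H}

theorem cyclicSpan_le {K : Submodule ℂ H} (hK : IsClosed (K : Set H))
    (h : ∀ E, MeasurableSet E → ∀ v ∈ s, P.P E v ∈ K) : P.cyclicSpan s ≤ K :=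
  Submodule.topologicalClosure_minimal _
    (Submodule.span_le.mpr (Set.image2_subset_iff.mpr h)) hK

theorem apply_mem_cyclicSpan {E : Set Λ} (hE : MeasurableSet E) {v : H} (hv : v ∈ s) :
    P.P E v ∈ P.cyclicSpan s :=
  Submodule.le_topologicalClosure _ (Submodule.subset_span (Set.mem_image2_of_mem hE hv))

theorem subset_cyclicSpan : s ⊆ P.cyclicSpan s := fun v hv => by
  simpa [P.complete] using apply_mem_cyclicSpan (P := P) MeasurableSet.univ hv

theorem cyclicSpan_mono (hst : s ⊆ t) : P.cyclicSpan s ≤ P.cyclicSpan t :=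
  cyclicSpan_le (Submodule.isClosed_topologicalClosure _) fun _ hE _ hv =>
    apply_mem_cyclicSpan hE (hst hv)

theorem apply_mem_cyclicSpan_of_mem {E : Set Λ} (hE : MeasurableSet E) {v : H}
    (hv : v ∈ P.cyclicSpan s) : P.P E v ∈ P.cyclicSpan s := by
  refine cyclicSpan_le (K := (P.cyclicSpan s).comap (P.P E).toLinearMap)
    ((Submodule.isClosed_topologicalClosure _).preimage (P.P E).continuous) ?_ hv
  intro F hF w hw
  rw [Submodule.mem_comap, ContinuousLinearMap.coe_coe, apply_apply hE hF]
  exact apply_mem_cyclicSpan (hE.inter hF) hw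

theorem apply_mem_orthogonal_cyclicSpan {E : Set Λ} (hE : MeasurableSet E) {w : H}
    (hw : w ∈ (P.cyclicSpan s)ᗮ) : P.P E w ∈ (P.cyclicSpan s)ᗮ := fun v hv => by
  rw [← P.selfAdjoint]
  exact hw _ (apply_mem_cyclicSpan_of_mem hE hv)

theorem cyclicSpan_le_ker {E : Set Λ} (hE : MeasurableSet E) (h : ∀ v ∈ s, P.P E v = 0) :
    P.cyclicSpan s ≤ LinearMap.ker (P.P E).toLinearMap :=
  cyclicSpan_le (ContinuousLinearMap.isClosed_ker _) fun F hF v hv => by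
    rw [LinearMap.mem_ker, ContinuousLinearMap.coe_coe, apply_apply hE hF, Set.inter_comm,
      ← apply_apply hF hE, h v hv, map_zero]

variable (P) in
theorem exists_sub_mem_cyclicSpan_and_mem_orthogonal (x : ℕ → H) :
    ∃ y : ℕ → H, ∀ n, x n - y n ∈ P.cyclicSpan (x '' Set.Iio n) ∧
      y n ∈ (P.cyclicSpan (x '' Set.Iio n))ᗮ := by
  have hsplit : ∀ n, ∃ y, x n - y ∈ P.cyclicSpan (x '' Set.Iio n) ∧
      y ∈ (P.cyclicSpan (x '' Set.Iio n))ᗮ := fun n => by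
    have : CompleteSpace (P.cyclicSpan (x '' Set.Iio n)) :=
      (Submodule.isClosed_topologicalClosure _).completeSpace_coe
    obtain ⟨a, ha, b, hb, hab⟩ :=
      (P.cyclicSpan (x '' Set.Iio n)).exists_add_mem_mem_orthogonal (x n)
    exact ⟨b, by rwa [hab, add_sub_cancel_right], hb⟩
  choose y hy using hsplit
  exact ⟨y, hy⟩

variable {x y : ℕ → H}

theorem pairwise_inner_apply_eq_zero
    (hy : ∀ n, x n - y n ∈ P.cyclicSpan (x '' Set.Iio n) ∧ y n ∈ (P.cyclicSpan (x '' Set.Iio n))ᗮ)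
    {E : Set Λ} (hE : MeasurableSet E) :
    Pairwise fun m n => inner ℂ (P.P E (y m)) (P.P E (y n)) = 0 := by
  have hlt : ∀ m n, m < n → inner ℂ (P.P E (y m)) (P.P E (y n)) = 0 := fun m n hmn => by
    have hym : y m ∈ P.cyclicSpan (x '' Set.Iio n) := by
      rw [← sub_sub_cancel (x m) (y m)]
      exact sub_mem (subset_cyclicSpan ⟨m, hmn, rfl⟩)
        (cyclicSpan_mono (Set.image_mono (Set.Iio_subset_Iio hmn.le)) (hy m).1)
    exact Submodule.inner_right_of_mem_orthogonal (apply_mem_cyclicSpan_of_mem hE hym)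
      (apply_mem_orthogonal_cyclicSpan hE (hy n).2)
  intro m n hmn
  rcases hmn.lt_or_gt with h | h
  · exact hlt m n h
  · exact inner_eq_zero_symm.mp (hlt n m h)

theorem apply_eq_zero_of_forall_apply_eq_zero
    (hy : ∀ n, x n - y n ∈ P.cyclicSpan (x '' Set.Iio n)) {E : Set Λ} (hE : MeasurableSet E)
    (h : ∀ n, P.P E (y n) = 0) (n : ℕ) : P.P E (x n) = 0 := by
  induction n using Nat.strong_induction_on with
  | _ n ih =>
    have hker := cyclicSpan_le_ker hE (s := x '' Set.Iio n)
      (by rintro _ ⟨j, hj, rfl⟩; exact ih j hj) (hy n)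
    rwa [LinearMap.mem_ker, ContinuousLinearMap.coe_coe, map_sub, h n, sub_zero] at hker

variable (P) in
theorem exists_apply_eq_zero_imp_eq_zero [TopologicalSpace.SeparableSpace H] :
    ∃ g : H, ∀ E, MeasurableSet E → P.P E g = 0 → P.P E = 0 := by
  obtain ⟨x, hx⟩ := TopologicalSpace.exists_dense_seq H
  obtain ⟨y, hy⟩ := P.exists_sub_mem_cyclicSpan_and_mem_orthogonal x
  obtain ⟨c, hc, hsum⟩ := exists_ne_zero_summable_smul (𝕜 := ℂ) y
  refine ⟨∑' n, c n • y n, fun E hE hEg => ?_⟩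
  have hEsum : HasSum (fun n => c n • P.P E (y n)) 0 := by
    simpa [hEg] using (P.P E).hasSum hsum.hasSum
  have hEy := eq_zero_of_hasSum_smul_eq_zero_of_pairwise_inner
    (pairwise_inner_apply_eq_zero hy hE) hc hEsum
  have hEx := apply_eq_zero_of_forall_apply_eq_zero (fun n => (hy n).1) hE hEy
  exact ContinuousLinearMap.ext fun v =>
    congr_fun (hx.equalizer (P.P E).continuous continuous_zero (funext hEx)) v

end SpectralMeasure

/-- existence of a vector of maximal type: some `g` with `μ_f ≪ μ_g` for all `f`. -/
theorem exists_maximal_vector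
    [TopologicalSpace.SeparableSpace H] (P : SpectralMeasure Λ H)
    (ν : H → Measure Λ)
    (hν : ∀ (f : H) (E : Set Λ), MeasurableSet E →
      ν f E = ENNReal.ofReal (inner ℂ f (P.P E f) : ℂ).re) :
    ∃ g : H, ∀ f : H, ν f ≪ ν g := by
  have hnull : ∀ f E, MeasurableSet E → (ν f E = 0 ↔ P.P E f = 0) := fun f E hE => by
    rw [hν f E hE, P.re_inner_self_apply, ENNReal.ofReal_eq_zero, sq_nonpos_iff, norm_eq_zero]
  obtain ⟨g, hg⟩ := P.exists_apply_eq_zero_imp_eq_zero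
  refine ⟨g, fun f => Measure.AbsolutelyContinuous.mk fun E hE hgE => ?_⟩
  rw [hnull f E hE, hg E hE ((hnull g E hE).mp hgE)]
  rfl
end

section
/- Suppose the spectral measure P on H is simple with generating (cyclic) vector g, and Q is a spectral measure on H commuting with P. Then for every measurable set F, there exists a measurable set E_F ∈ A such that Q(F) = J_{χ_{E_F}} = P(E_F). -/
open MeasureTheory Filter Topology
open scoped ENNReal

variable {Λ H : Type*} [MeasurableSpace Λ] [NormedAddCommGroup H]
  [InnerProductSpace ℂ H] [CompleteSpace H]

namespace SpectralMeasure

theorem empty (P : SpectralMeasure Λ H) : P.P ∅ = 0 := by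
  ext x
  have h := P.countablyAdditive (fun _ => ∅) (fun _ => MeasurableSet.empty)
    (fun i j _ => by simp [Function.onFun]) x
  rw [Set.iUnion_empty] at h
  have h0 : Tendsto (fun _ : ℕ => P.P ∅ x) cofinite (𝓝 0) :=
    h.summable.tendsto_cofinite_zero
  have h1 : Tendsto (fun _ : ℕ => P.P ∅ x) cofinite (𝓝 (P.P ∅ x)) := tendsto_const_nhds
  simpa using tendsto_nhds_unique h1 h0

theorem union2 (P : SpectralMeasure Λ H) {A B : Set Λ} (hA : MeasurableSet A)
    (hB : MeasurableSet B) (hd : Disjoint A B) : P.P (A ∪ B) = P.P A + P.P B := by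
  ext x
  set E : ℕ → Set Λ := fun n => if n = 0 then A else if n = 1 then B else ∅ with hE
  have hmeas : ∀ n, MeasurableSet (E n) := by
    intro n
    simp only [hE]
    split <;> [exact hA; skip]
    split <;> [exact hB; exact MeasurableSet.empty]
  have e0 : E 0 = A := by simp [hE]
  have e1 : E 1 = B := by simp [hE]
  have e2 : ∀ k, E (k + 2) = ∅ := fun k => by simp [hE]
  have hdisj : Pairwise (Function.onFun Disjoint E) := by
    intro i j hij
    simp only [Function.onFun]
    rcases i with _ | _ | i <;> rcases j with _ | _ | j <;>
      simp_all [e0, e1, e2, hd, hd.symm]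
  have hU : (⋃ n, E n) = A ∪ B := by
    ext l
    simp only [Set.mem_iUnion, Set.mem_union, hE]
    constructor
    · rintro ⟨n, hn⟩
      rcases n with _ | _ | n
      · exact Or.inl hn
      · exact Or.inr hn
      · simp at hn
    · rintro (h | h)
      · exact ⟨0, h⟩
      · exact ⟨1, h⟩
  have h := P.countablyAdditive E hmeas hdisj x
  rw [hU] at h
  have h2 : HasSum (fun n => P.P (E n) x) (∑ n ∈ ({0, 1} : Finset ℕ), P.P (E n) x) := by
    apply hasSum_sum_of_ne_finset_zero
    intro n hn
    simp only [Finset.mem_insert, Finset.mem_singleton] at hn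
    push_neg at hn
    have : E n = ∅ := by simp [hE, hn.1, hn.2]
    simp [this, P.empty]
  rw [h.unique h2]
  rw [Finset.sum_pair (by norm_num : (0:ℕ) ≠ 1)]
  simp [hE]

theorem comp_disjoint (P : SpectralMeasure Λ H) {A B : Set Λ} (hA : MeasurableSet A)
    (hB : MeasurableSet B) (hd : Disjoint A B) : P.P A ∘L P.P B = 0 := by
  have hU := P.union2 hA hB hd
  have hid := P.idem (A ∪ B)
  rw [hU] at hid
  have hexp : (P.P A + P.P B) ∘L (P.P A + P.P B)
      = P.P A ∘L P.P A + P.P A ∘L P.P B + (P.P B ∘L P.P A + P.P B ∘L P.P B) := by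
    rw [ContinuousLinearMap.add_comp, ContinuousLinearMap.comp_add,
      ContinuousLinearMap.comp_add]
  rw [hexp, P.idem A, P.idem B] at hid
  have hsum : P.P A ∘L P.P B + P.P B ∘L P.P A = 0 := by
    have := hid
    abel_nf at this ⊢
    linear_combination (norm := abel_nf) this
  have hneg : P.P A ∘L P.P B = -(P.P B ∘L P.P A) :=
    eq_neg_of_add_eq_zero_left hsum
  -- triple product equals the double product
  have htriple : (P.P A ∘L P.P B) ∘L P.P A = P.P A ∘L P.P B := by
    rw [hneg, ContinuousLinearMap.neg_comp, ContinuousLinearMap.comp_assoc, P.idem A, ← hneg]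
  -- self-adjointness of the triple product
  have hsa : ∀ x y : H, (inner ℂ ((P.P A ∘L P.P B) x) y : ℂ) = inner ℂ x ((P.P A ∘L P.P B) y) := by
    intro x y
    have hx : (P.P A ∘L P.P B) x = (P.P A ∘L P.P B ∘L P.P A) x := by
      rw [← ContinuousLinearMap.comp_assoc, htriple]
    have hy : (P.P A ∘L P.P B) y = (P.P A ∘L P.P B ∘L P.P A) y := by
      rw [← ContinuousLinearMap.comp_assoc, htriple]
    rw [hx, hy]
    simp only [ContinuousLinearMap.comp_apply]
    rw [P.selfAdjoint A (P.P B (P.P A x)) y, P.selfAdjoint B (P.P A x),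
      P.selfAdjoint A x]
  ext x
  have h0 : (inner ℂ ((P.P A ∘L P.P B) x) ((P.P A ∘L P.P B) x) : ℂ) = 0 := by
    have h1 : ∀ y : H, (inner ℂ ((P.P A ∘L P.P B) x) y : ℂ)
        = -(inner ℂ ((P.P A ∘L P.P B) x) y : ℂ) := by
      intro y
      conv_lhs => rw [hsa x y]
      have h2 : (inner ℂ x ((P.P A ∘L P.P B) y) : ℂ)
          = -(inner ℂ x ((P.P B ∘L P.P A) y) : ℂ) := by
        rw [hneg]; simp
      rw [h2]
      congr 1
      simp only [ContinuousLinearMap.comp_apply]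
      rw [← P.selfAdjoint B x (P.P A y), ← P.selfAdjoint A (P.P B x) y]
    have := h1 ((P.P A ∘L P.P B) x)
    have h3 : (2 : ℂ) * inner ℂ ((P.P A ∘L P.P B) x) ((P.P A ∘L P.P B) x) = 0 := by
      linear_combination this
    simpa using h3
  rw [inner_self_eq_zero] at h0
  simpa using h0

theorem comp_inter (P : SpectralMeasure Λ H) {A B : Set Λ} (hA : MeasurableSet A)
    (hB : MeasurableSet B) : P.P A ∘L P.P B = P.P (A ∩ B) := by
  have d1 : Disjoint (A ∩ B) (A \ B) := by
    rw [Set.disjoint_left]; rintro x ⟨-, hxB⟩ ⟨-, hxB'⟩; exact hxB' hxB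
  have d2 : Disjoint (A ∩ B) (B \ A) := by
    rw [Set.disjoint_left]; rintro x ⟨hxA, -⟩ ⟨-, hxA'⟩; exact hxA' hxA
  have d3 : Disjoint (A \ B) (B \ A) := by
    rw [Set.disjoint_left]; rintro x ⟨hxA, -⟩ ⟨-, hxA'⟩; exact hxA' hxA
  have d4 : Disjoint (A \ B) (A ∩ B) := d1.symm
  have hA' : P.P A = P.P (A ∩ B) + P.P (A \ B) := by
    rw [← P.union2 (hA.inter hB) (hA.diff hB) d1, Set.inter_union_diff]
  have hB' : P.P B = P.P (A ∩ B) + P.P (B \ A) := by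
    rw [← P.union2 (hA.inter hB) (hB.diff hA) d2, Set.inter_comm A B,
      Set.inter_union_diff]
  rw [hA', hB', ContinuousLinearMap.add_comp, ContinuousLinearMap.comp_add,
    ContinuousLinearMap.comp_add, P.idem (A ∩ B),
    P.comp_disjoint (hA.inter hB) (hB.diff hA) d2,
    P.comp_disjoint (hA.diff hB) (hA.inter hB) d4,
    P.comp_disjoint (hA.diff hB) (hB.diff hA) d3]
  simp

theorem apply_inter (P : SpectralMeasure Λ H) {A B : Set Λ} (hA : MeasurableSet A)
    (hB : MeasurableSet B) (x : H) : P.P A (P.P B x) = P.P (A ∩ B) x := by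
  rw [← P.comp_inter hA hB]; rfl

/-- `⟪x, P A x⟫ = ‖P A x‖²`. -/
theorem inner_apply_self_right (P : SpectralMeasure Λ H) (A : Set Λ) (x : H) :
    (inner ℂ x (P.P A x) : ℂ) = ((‖P.P A x‖ ^ 2 : ℝ) : ℂ) := by
  have h1 : P.P A (P.P A x) = P.P A x := by
    rw [← ContinuousLinearMap.comp_apply, P.idem A]
  have h2 : (inner ℂ (P.P A x) (P.P A x) : ℂ) = inner ℂ x (P.P A (P.P A x)) :=
    P.selfAdjoint A x (P.P A x)
  rw [h1] at h2
  rw [← h2, inner_self_eq_norm_sq_to_K]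
  norm_num

theorem inner_apply_self_left (P : SpectralMeasure Λ H) (A : Set Λ) (x : H) :
    (inner ℂ (P.P A x) x : ℂ) = ((‖P.P A x‖ ^ 2 : ℝ) : ℂ) := by
  rw [← inner_conj_symm, P.inner_apply_self_right, Complex.conj_ofReal]

/-- If a pairwise-orthogonal family has a sum, the squared norms sum to the
squared norm of the sum. -/
theorem _root_.hasSum_norm_sq_of_orthogonal {f : ℕ → H} {a : H}
    (hf : HasSum f a) (horth : ∀ i j, i ≠ j → (inner ℂ (f i) (f j) : ℂ) = 0) :
    HasSum (fun n => ‖f n‖ ^ 2) (‖a‖ ^ 2) := by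
  have h1 : ∀ n, (inner ℂ (f n) a : ℂ) = ((‖f n‖ ^ 2 : ℝ) : ℂ) := by
    intro n
    have h2 : HasSum (fun m => (inner ℂ (f n) (f m) : ℂ)) (inner ℂ (f n) a) :=
      (innerSL ℂ (f n)).hasSum hf
    have h3 : HasSum (fun m => (inner ℂ (f n) (f m) : ℂ))
        ((‖f n‖ ^ 2 : ℝ) : ℂ) := by
      have : (fun m => (inner ℂ (f n) (f m) : ℂ))
          = fun m => if m = n then ((‖f n‖ ^ 2 : ℝ) : ℂ) else 0 := by
        funext m
        by_cases hm : m = n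
        · subst hm; simp [inner_self_eq_norm_sq_to_K]
        · simp [hm, horth n m (fun h => hm h.symm)]
      rw [this]
      exact hasSum_ite_eq n _
    exact h2.unique h3
  have h4 : HasSum (fun n => ((‖f n‖ ^ 2 : ℝ) : ℂ)) (inner ℂ a a : ℂ) := by
    have h5 := (innerSL ℂ a).hasSum hf
    have h6 : (fun n => (inner ℂ a (f n) : ℂ)) = fun n => ((‖f n‖ ^ 2 : ℝ) : ℂ) := by
      funext n
      rw [← inner_conj_symm, h1 n, Complex.conj_ofReal]
    simp only [innerSL_apply_apply] at h5
    rwa [h6] at h5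
  have h7 := h4.mapL Complex.reCLM
  have h8 : (inner ℂ a a : ℂ).re = ‖a‖ ^ 2 := by
    rw [inner_self_eq_norm_sq_to_K]
    norm_cast
  simp only [Complex.reCLM_apply, Complex.ofReal_re, h8] at h7
  exact h7

/-- The diagonal measure `E ↦ ‖P(E) x‖²`. -/
noncomputable def diag (P : SpectralMeasure Λ H) (x : H) : Measure Λ :=
  Measure.ofMeasurable (fun E _ => ENNReal.ofReal (‖P.P E x‖ ^ 2))
    (by simp [P.empty])
    (by
      intro f hmeas hdisj
      have hsum := P.countablyAdditive f hmeas hdisj x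
      have horth : ∀ i j, i ≠ j →
          (inner ℂ (P.P (f i) x) (P.P (f j) x) : ℂ) = 0 := by
        intro i j hij
        rw [P.selfAdjoint (f i) x (P.P (f j) x), P.apply_inter (hmeas i) (hmeas j),
          Set.disjoint_iff_inter_eq_empty.mp (hdisj hij), P.empty]
        simp
      have hns := hasSum_norm_sq_of_orthogonal hsum horth
      rw [← ENNReal.ofReal_tsum_of_nonneg (fun n => sq_nonneg _) hns.summable,
        hns.tsum_eq])

theorem diag_apply (P : SpectralMeasure Λ H) (x : H) {E : Set Λ}
    (hE : MeasurableSet E) : P.diag x E = ENNReal.ofReal (‖P.P E x‖ ^ 2) :=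
  Measure.ofMeasurable_apply E hE

theorem diag_apply_toReal (P : SpectralMeasure Λ H) (x : H) {E : Set Λ}
    (hE : MeasurableSet E) : (P.diag x E).toReal = ‖P.P E x‖ ^ 2 := by
  rw [P.diag_apply x hE, ENNReal.toReal_ofReal (sq_nonneg _)]

instance (P : SpectralMeasure Λ H) (x : H) : IsFiniteMeasure (P.diag x) :=
  ⟨by rw [P.diag_apply x MeasurableSet.univ]; exact ENNReal.ofReal_lt_top⟩

end SpectralMeasure

section RepSec
variable {Λ H : Type*} [MeasurableSpace Λ] [NormedAddCommGroup H]
  [InnerProductSpace ℂ H] [CompleteSpace H]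

theorem bdd_integrable {ψ : Λ → ℂ} (hm : Measurable ψ) {C : ℝ} (hC : ∀ l, ‖ψ l‖ ≤ C)
    (m : Measure Λ) [IsFiniteMeasure m] : Integrable ψ m :=
  Integrable.mono' (integrable_const C) hm.aestronglyMeasurable (ae_of_all _ hC)

/-- `ψ` is an L²-representative of `x` in the cyclic model generated by `g`. -/
def SpecRep (P : Set Λ → (H →L[ℂ] H)) (g u : H) (μ ν : Measure Λ) (x : H) (ψ : Λ → ℂ) : Prop :=
  Measurable ψ ∧ (∃ C, ∀ l, ‖ψ l‖ ≤ C) ∧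
  (∀ E, MeasurableSet E → (inner ℂ (P E g) x : ℂ) = ∫ l in E, ψ l ∂μ) ∧
  (∀ E, MeasurableSet E → (inner ℂ (P E u) x : ℂ) = ∫ l in E, ψ l ∂ν) ∧
  (∀ (v : H) (ρ : Λ → ℂ), Measurable ρ → (∃ C, ∀ l, ‖ρ l‖ ≤ C) →
    (∀ E, MeasurableSet E → (inner ℂ (P E g) v : ℂ) = ∫ l in E, ρ l ∂μ) →
    (inner ℂ x v : ℂ) = ∫ l, (starRingEnd ℂ) (ψ l) * ρ l ∂μ)

variable {P : Set Λ → (H →L[ℂ] H)} {g u : H} {μ ν : Measure Λ}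

theorem SpecRep.zero : SpecRep P g u μ ν 0 0 := by
  refine ⟨measurable_const, ⟨0, by simp⟩, ?_, ?_, ?_⟩ <;> intros <;> simp

theorem SpecRep.add [IsFiniteMeasure μ] [IsFiniteMeasure ν] {x y : H} {ψ ρ : Λ → ℂ}
    (hx : SpecRep P g u μ ν x ψ) (hy : SpecRep P g u μ ν y ρ) :
    SpecRep P g u μ ν (x + y) (ψ + ρ) := by
  obtain ⟨hmψ, ⟨C₁, hC₁⟩, hAψ, hBψ, hCψ⟩ := hx
  obtain ⟨hmρ, ⟨C₂, hC₂⟩, hAρ, hBρ, hCρ⟩ := hy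
  refine ⟨hmψ.add hmρ, ⟨C₁ + C₂, fun l => (norm_add_le _ _).trans
    (add_le_add (hC₁ l) (hC₂ l))⟩, ?_, ?_, ?_⟩
  · intro E hE
    rw [inner_add_right, hAψ E hE, hAρ E hE, ← integral_add
      ((bdd_integrable hmψ hC₁ μ).integrableOn) ((bdd_integrable hmρ hC₂ μ).integrableOn)]
    rfl
  · intro E hE
    rw [inner_add_right, hBψ E hE, hBρ E hE, ← integral_add
      ((bdd_integrable hmψ hC₁ ν).integrableOn) ((bdd_integrable hmρ hC₂ ν).integrableOn)]
    rfl
  · intro v σ hmσ hbσ hvσ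
    obtain ⟨C₃, hC₃⟩ := hbσ
    rw [inner_add_left, hCψ v σ hmσ ⟨C₃, hC₃⟩ hvσ, hCρ v σ hmσ ⟨C₃, hC₃⟩ hvσ]
    have hint : ∀ (τ : Λ → ℂ), Measurable τ → (∀ l, ‖τ l‖ ≤ |C₁| + |C₂|) →
        Integrable (fun l => (starRingEnd ℂ) (τ l) * σ l) μ := fun τ hmτ hbτ =>
      bdd_integrable (((RCLike.continuous_conj.measurable.comp hmτ)).mul hmσ)
        (C := (|C₁| + |C₂|) * |C₃|) (fun l => by
          show ‖(starRingEnd ℂ) (τ l) * σ l‖ ≤ (|C₁| + |C₂|) * |C₃|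
          rw [norm_mul, RCLike.norm_conj]
          exact mul_le_mul (hbτ l) ((hC₃ l).trans (le_abs_self _))
            (norm_nonneg _) (by positivity)) μ
    rw [← integral_add
      (hint ψ hmψ fun l => (hC₁ l).trans ((le_abs_self C₁).trans
        (le_add_of_nonneg_right (abs_nonneg _))))
      (hint ρ hmρ fun l => (hC₂ l).trans ((le_abs_self C₂).trans
        (le_add_of_nonneg_left (abs_nonneg _))))]
    congr 1
    funext l
    simp only [Pi.add_apply, map_add]
    ring

theorem SpecRep.smul [IsFiniteMeasure μ] [IsFiniteMeasure ν] {x : H} {ψ : Λ → ℂ} (c : ℂ)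
    (hx : SpecRep P g u μ ν x ψ) : SpecRep P g u μ ν (c • x) (fun l => c * ψ l) := by
  obtain ⟨hmψ, ⟨C₁, hC₁⟩, hAψ, hBψ, hCψ⟩ := hx
  refine ⟨measurable_const.mul hmψ, ⟨‖c‖ * |C₁|, fun l => by
    rw [norm_mul]
    exact mul_le_mul_of_nonneg_left ((hC₁ l).trans (le_abs_self _)) (norm_nonneg _)⟩,
    ?_, ?_, ?_⟩
  · intro E hE
    rw [inner_smul_right, hAψ E hE, ← integral_const_mul]
  · intro E hE
    rw [inner_smul_right, hBψ E hE, ← integral_const_mul]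
  · intro v σ hmσ hbσ hvσ
    rw [inner_smul_left, hCψ v σ hmσ hbσ hvσ, ← integral_const_mul]
    congr 1
    funext l
    simp only [map_mul]
    ring

theorem SpecRep.sub [IsFiniteMeasure μ] [IsFiniteMeasure ν] {x y : H} {ψ ρ : Λ → ℂ}
    (hx : SpecRep P g u μ ν x ψ) (hy : SpecRep P g u μ ν y ρ) :
    SpecRep P g u μ ν (x - y) (ψ - ρ) := by
  have h := hx.add (hy.smul (-1))
  have e1 : x + (-1 : ℂ) • y = x - y := by
    rw [neg_one_smul]; abel
  have e2 : (ψ + fun l => (-1 : ℂ) * ρ l) = ψ - ρ := by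
    funext l; simp [sub_eq_add_neg]
  rwa [e1, e2] at h

end RepSec

/-- if `P` is simple (has a cyclic vector `g` with `H_g = H`) and `Q` is a
spectral measure commuting with `P`, then every projection `Q(F)` equals `P(E_F)` for
some measurable set `E_F` (i.e. `Q(F) = J_{χ_{E_F}}`). -/
theorem commutant_of_simple_spectral_measure
    [TopologicalSpace.SeparableSpace H]
    {Ξ : Type*} [MeasurableSpace Ξ]
    (P : SpectralMeasure Λ H) (Q : SpectralMeasure Ξ H)
    (g : H) (hsimple : cyclicSubspace P g = ⊤)
    (hcomm : ∀ (E : Set Λ) (F : Set Ξ), MeasurableSet E → MeasurableSet F →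
      P.P E ∘L Q.P F = Q.P F ∘L P.P E) :
    ∀ F : Set Ξ, MeasurableSet F → ∃ E : Set Λ, MeasurableSet E ∧ Q.P F = P.P E := by
  have hsimple' : (Submodule.span ℂ
      {x : H | ∃ E : Set Λ, MeasurableSet E ∧ x = P.P E g}).topologicalClosure = ⊤ := hsimple
  intro F hF
  set q : H →L[ℂ] H := Q.P F with hqdef
  set u : H := q g with hudef
  -- basic facts about the projection q
  have hq_sa : ∀ x y : H, (inner ℂ (q x) y : ℂ) = inner ℂ x (q y) := Q.selfAdjoint F
  have hq_idem : ∀ x : H, q (q x) = q x := fun x => by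
    rw [← ContinuousLinearMap.comp_apply, Q.idem F]
  have hq_comm : ∀ E : Set Λ, MeasurableSet E → ∀ x : H, P.P E (q x) = q (P.P E x) :=
    fun E hE x => by
      rw [← ContinuousLinearMap.comp_apply, hcomm E F hE hF]; rfl
  have hPu : ∀ E : Set Λ, MeasurableSet E → P.P E u = q (P.P E g) := fun E hE =>
    hq_comm E hE g
  -- the two diagonal measures
  set μ : MeasureTheory.Measure Λ := P.diag g with hμdef
  set ν : MeasureTheory.Measure Λ := P.diag u with hνdef
  haveI hμfin : IsFiniteMeasure μ := inferInstanceAs (IsFiniteMeasure (P.diag g))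
  haveI hνfin : IsFiniteMeasure ν := inferInstanceAs (IsFiniteMeasure (P.diag u))
  -- q is a contraction
  have hq_contr : ∀ x : H, ‖q x‖ ≤ ‖x‖ := by
    intro x
    have h1 : (inner ℂ (q x) (q x) : ℂ) = inner ℂ x (q x) := by
      rw [hq_sa x (q x), hq_idem x]
    have h2 : ‖q x‖ ^ 2 = ((inner ℂ (q x) (q x) : ℂ)).re := by
      rw [inner_self_eq_norm_sq_to_K]
      norm_cast
    have h3 : ((inner ℂ x (q x) : ℂ)).re ≤ ‖x‖ * ‖q x‖ := by
      calc ((inner ℂ x (q x) : ℂ)).re ≤ ‖(inner ℂ x (q x) : ℂ)‖ := Complex.re_le_norm _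
        _ ≤ ‖x‖ * ‖q x‖ := norm_inner_le_norm x (q x)
    have h4 : ‖q x‖ ^ 2 ≤ ‖x‖ * ‖q x‖ := by rw [h2, h1]; exact h3
    nlinarith [norm_nonneg (q x), norm_nonneg x]
  -- ν ≤ μ
  have hle : ν ≤ μ := by
    rw [Measure.le_iff]
    intro E hE
    rw [hνdef, hμdef, P.diag_apply u hE, P.diag_apply g hE]
    apply ENNReal.ofReal_le_ofReal
    rw [hPu E hE]
    have := hq_contr (P.P E g)
    nlinarith [norm_nonneg (q (P.P E g)), norm_nonneg (P.P E g)]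
  have hac : ν ≪ μ := Measure.absolutelyContinuous_of_le hle
  -- key inner-product identities
  have k1 : ∀ E : Set Λ, MeasurableSet E →
      (inner ℂ (P.P E g) u : ℂ) = (((ν E).toReal : ℝ) : ℂ) := by
    intro E hE
    have h1 : (inner ℂ u (P.P E u) : ℂ) = inner ℂ u (P.P E g) := by
      rw [hPu E hE, hudef]
      rw [show (inner ℂ (q g) (q (P.P E g)) : ℂ) = inner ℂ (q (q g)) (P.P E g) from
        (hq_sa (q g) (P.P E g)).symm, hq_idem g]
    have h2 : (inner ℂ u (P.P E g) : ℂ) = (((ν E).toReal : ℝ) : ℂ) := by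
      rw [← h1, P.inner_apply_self_right, hνdef, P.diag_apply_toReal u hE]
    rw [← inner_conj_symm, h2, Complex.conj_ofReal]
  have k2 : ∀ E E' : Set Λ, MeasurableSet E → MeasurableSet E' →
      (inner ℂ (P.P E u) (P.P E' g) : ℂ) = (((ν (E ∩ E')).toReal : ℝ) : ℂ) := by
    intro E E' hE hE'
    have h1 : (inner ℂ (P.P E' g) (P.P E u) : ℂ) = (((ν (E' ∩ E)).toReal : ℝ) : ℂ) := by
      rw [P.selfAdjoint E' g (P.P E u), P.apply_inter hE' hE,
        ← P.selfAdjoint (E' ∩ E) g u, k1 _ (hE'.inter hE)]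
    rw [← inner_conj_symm, h1, Complex.conj_ofReal, Set.inter_comm]
  have k3 : ∀ E : Set Λ, MeasurableSet E →
      (inner ℂ (P.P E u) u : ℂ) = (((ν E).toReal : ℝ) : ℂ) := by
    intro E hE
    rw [P.inner_apply_self_left, hνdef, P.diag_apply_toReal u hE]
  -- Radon–Nikodym
  set φ : Λ → ℝ≥0∞ := ν.rnDeriv μ with hφdef
  have hφm : Measurable φ := Measure.measurable_rnDeriv ν μ
  have hwd : μ.withDensity φ = ν := Measure.withDensity_rnDeriv_eq ν μ hac
  have hφ1 : φ ≤ᵐ[μ] 1 := Measure.rnDeriv_le_one_of_le hle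
  have hφlt : ∀ᵐ l ∂μ, φ l < ∞ := Measure.rnDeriv_lt_top ν μ
  set φ' : Λ → NNReal := fun l => (φ l).toNNReal with hφ'def
  have hφ'm : Measurable φ' := hφm.ennreal_toNNReal
  have hwd' : μ.withDensity (fun l => ((φ' l : NNReal) : ENNReal)) = ν := by
    rw [← hwd]
    apply withDensity_congr_ae
    filter_upwards [hφlt] with l hl
    simp [hφ'def, ENNReal.coe_toNNReal hl.ne]
  have hφ'1 : ∀ᵐ l ∂μ, ((φ' l : NNReal) : ℝ) ≤ 1 := by
    filter_upwards [hφ1] with l hl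
    have h1 : (φ l).toNNReal ≤ (1 : ℝ≥0∞).toNNReal :=
      ENNReal.toNNReal_mono (by simp) hl
    simpa [hφ'def] using h1
  set w : Λ → ℂ := fun l => (((φ' l : NNReal) : ℝ) : ℂ) with hwdef
  have hwm : Measurable w :=
    Complex.measurable_ofReal.comp (NNReal.continuous_coe.measurable.comp hφ'm)
  have hw_bd : ∀ᵐ l ∂μ, ‖w l‖ ≤ 1 := by
    filter_upwards [hφ'1] with l hl
    simp only [hwdef, Complex.norm_real, Real.norm_eq_abs,
      abs_of_nonneg (NNReal.coe_nonneg (φ' l))]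
    exact hl
  -- integration against ν is integration against w·μ
  have hνint : ∀ (ψ : Λ → ℂ), ∀ E : Set Λ, MeasurableSet E →
      ∫ l in E, ψ l ∂ν = ∫ l in E, w l * ψ l ∂μ := by
    intro ψ E hE
    rw [← hwd', setIntegral_withDensity_eq_setIntegral_smul hφ'm ψ hE]
    apply setIntegral_congr_ae hE
    apply ae_of_all
    intro l _
    rw [hwdef, NNReal.smul_def, Complex.real_smul]
  -- the generating set
  set S : Set H := {x : H | ∃ E : Set Λ, MeasurableSet E ∧ x = P.P E g} with hSdef
  -- every element of the span of S has an L² representative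
  have key : ∀ x ∈ Submodule.span ℂ S, ∃ ψ : Λ → ℂ, SpecRep P.P g u μ ν x ψ := by
    intro x hx
    induction hx using Submodule.span_induction with
    | mem x hxS =>
      obtain ⟨E₀, hE₀, rfl⟩ := hxS
      refine ⟨E₀.indicator (fun _ => (1 : ℂ)), measurable_one.indicator hE₀,
        ⟨1, fun l => ?_⟩, ?_, ?_, ?_⟩
      · by_cases hl : l ∈ E₀ <;> simp [hl]
      · intro E hE
        have hL : (inner ℂ (P.P E g) (P.P E₀ g) : ℂ) = (((μ (E ∩ E₀)).toReal : ℝ) : ℂ) := by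
          rw [P.selfAdjoint E g (P.P E₀ g), P.apply_inter hE hE₀,
            P.inner_apply_self_right, hμdef, P.diag_apply_toReal g (hE.inter hE₀)]
        rw [hL, setIntegral_indicator hE₀, setIntegral_const]
        simp; rfl
      · intro E hE
        have hL : (inner ℂ (P.P E u) (P.P E₀ g) : ℂ) = (((ν (E ∩ E₀)).toReal : ℝ) : ℂ) :=
          k2 E E₀ hE hE₀
        rw [hL, setIntegral_indicator hE₀, setIntegral_const]
        simp; rfl
      · intro v ρ hmρ hbρ hvρ
        have h1 : (fun l => (starRingEnd ℂ) (E₀.indicator (fun _ => (1 : ℂ)) l) * ρ l)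
            = E₀.indicator ρ := by
          funext l
          by_cases hl : l ∈ E₀ <;> simp [hl]
        rw [h1, integral_indicator hE₀]
        exact hvρ E₀ hE₀
    | zero => exact ⟨0, SpecRep.zero⟩
    | add x y hxmem hymem hx hy =>
      obtain ⟨ψ, hψ⟩ := hx
      obtain ⟨ρ, hρ⟩ := hy
      exact ⟨ψ + ρ, hψ.add hρ⟩
    | smul c x hxmem hx =>
      obtain ⟨ψ, hψ⟩ := hx
      exact ⟨fun l => c * ψ l, hψ.smul c⟩
  -- u is approximated by elements of the span
  have hucl : u ∈ closure ((Submodule.span ℂ S : Submodule ℂ H) : Set H) := by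
    rw [← Submodule.topologicalClosure_coe, hsimple']
    trivial
  obtain ⟨x, hxS, hxlim⟩ := mem_closure_iff_seq_limit.mp hucl
  choose ψ hψ using fun n => key (x n) (hxS n)
  -- corresponding elements of L²(μ)
  have hmem : ∀ n, MemLp (ψ n) 2 μ := by
    intro n
    obtain ⟨C, hC⟩ := (hψ n).2.1
    exact MemLp.of_bound (hψ n).1.aestronglyMeasurable C (ae_of_all _ hC)
  set f : ℕ → Lp ℂ 2 μ := fun n => (hmem n).toLp (ψ n) with hfdef
  have hcoe : ∀ n, f n =ᵐ[μ] ψ n := fun n => (hmem n).coeFn_toLp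
  -- the norms of differences agree
  have hdiff : ∀ n m, ‖f n - f m‖ = ‖x n - x m‖ := by
    intro n m
    have hrepd : SpecRep P.P g u μ ν (x n - x m) (ψ n - ψ m) := (hψ n).sub (hψ m)
    obtain ⟨hmd, hbd, hAd, hBd, hCd⟩ := hrepd
    have hH : (inner ℂ (x n - x m) (x n - x m) : ℂ)
        = ∫ l, (starRingEnd ℂ) ((ψ n - ψ m) l) * (ψ n - ψ m) l ∂μ :=
      hCd (x n - x m) (ψ n - ψ m) hmd hbd hAd
    have hL : (inner ℂ (f n - f m) (f n - f m) : ℂ)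
        = ∫ l, (starRingEnd ℂ) ((ψ n - ψ m) l) * (ψ n - ψ m) l ∂μ := by
      rw [L2.inner_def]
      apply integral_congr_ae
      filter_upwards [Lp.coeFn_sub (f n) (f m), hcoe n, hcoe m] with l h1 h2 h3
      rw [RCLike.inner_apply, h1, Pi.sub_apply, h2, h3]
      simp only [Pi.sub_apply]; ring
    have hsq : (inner ℂ (x n - x m) (x n - x m) : ℂ) = inner ℂ (f n - f m) (f n - f m) :=
      hH.trans hL.symm
    rw [norm_eq_sqrt_re_inner (𝕜 := ℂ) (f n - f m), norm_eq_sqrt_re_inner (𝕜 := ℂ) (x n - x m), hsq]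
  -- limit in L²
  have hfc : CauchySeq f := by
    have hxc : CauchySeq x := hxlim.cauchySeq
    rw [Metric.cauchySeq_iff] at hxc ⊢
    intro ε hε
    obtain ⟨N, hN⟩ := hxc ε hε
    exact ⟨N, fun n hn m hm => by
      rw [dist_eq_norm, hdiff n m, ← dist_eq_norm]
      exact hN n hn m hm⟩
  obtain ⟨flim, hflim⟩ := cauchySeq_tendsto_of_complete hfc
  have hμE : ∀ E : Set Λ, μ E ≠ ⊤ := fun E => measure_ne_top μ E
  -- limit identity against indicators
  have hI : ∀ E : Set Λ, MeasurableSet E →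
      ∫ l in E, flim l ∂μ = (((ν E).toReal : ℝ) : ℂ) := by
    intro E hE
    set ind : Lp ℂ 2 μ := indicatorConstLp 2 hE (hμE E) (1 : ℂ) with hinddef
    have hval : ∀ n, (inner ℂ ind (f n) : ℂ) = inner ℂ (P.P E g) (x n) := by
      intro n
      rw [L2.inner_indicatorConstLp_one hE (hμE E) (f n),
        integral_congr_ae (ae_restrict_of_ae (hcoe n))]
      exact ((hψ n).2.2.1 E hE).symm
    have t1 : Tendsto (fun n => (inner ℂ ind (f n) : ℂ)) atTop (𝓝 (inner ℂ ind flim)) :=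
      Filter.Tendsto.inner tendsto_const_nhds hflim
    have t2 : Tendsto (fun n => (inner ℂ (P.P E g) (x n) : ℂ)) atTop
        (𝓝 (inner ℂ (P.P E g) u)) := Filter.Tendsto.inner tendsto_const_nhds hxlim
    have huniq : (inner ℂ ind flim : ℂ) = inner ℂ (P.P E g) u :=
      tendsto_nhds_unique (t1.congr hval) t2
    rw [← L2.inner_indicatorConstLp_one hE (hμE E) flim, huniq, k1 E hE]
  -- limit identity against w-weighted indicators
  have hII : ∀ E : Set Λ, MeasurableSet E →
      ∫ l in E, w l * flim l ∂μ = (((ν E).toReal : ℝ) : ℂ) := by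
    intro E hE
    have hmemW : MemLp (E.indicator w) 2 μ := by
      refine MemLp.of_bound ((hwm.indicator hE).aestronglyMeasurable) 1 ?_
      filter_upwards [hw_bd] with l hl
      by_cases hlE : l ∈ E
      · rwa [Set.indicator_of_mem hlE]
      · rw [Set.indicator_of_notMem hlE]; simp
    set W : Lp ℂ 2 μ := hmemW.toLp _ with hWdef
    have hWcoe : W =ᵐ[μ] E.indicator w := hmemW.coeFn_toLp
    have hWinner : ∀ (h : Lp ℂ 2 μ) (ρ : Λ → ℂ), (h : Λ → ℂ) =ᵐ[μ] ρ →
        (inner ℂ W h : ℂ) = ∫ l in E, w l * ρ l ∂μ := by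
      intro h ρ hρ
      rw [L2.inner_def]
      have hae : ∀ᵐ l ∂μ, (inner ℂ (W l) (h l) : ℂ)
          = E.indicator (fun l => w l * ρ l) l := by
        filter_upwards [hWcoe, hρ] with l h1 h2
        rw [RCLike.inner_apply, h1, h2]
        by_cases hlE : l ∈ E
        · rw [Set.indicator_of_mem hlE, Set.indicator_of_mem hlE, hwdef,
            Complex.conj_ofReal]; exact mul_comm _ _
        · rw [Set.indicator_of_notMem hlE, Set.indicator_of_notMem hlE]
          simp
      rw [integral_congr_ae hae, integral_indicator hE]
    have hval : ∀ n, (inner ℂ W (f n) : ℂ) = inner ℂ (P.P E u) (x n) := by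
      intro n
      rw [hWinner (f n) (ψ n) (hcoe n), ← hνint (ψ n) E hE]
      exact ((hψ n).2.2.2.1 E hE).symm
    have t1 : Tendsto (fun n => (inner ℂ W (f n) : ℂ)) atTop (𝓝 (inner ℂ W flim)) :=
      Filter.Tendsto.inner tendsto_const_nhds hflim
    have t2 : Tendsto (fun n => (inner ℂ (P.P E u) (x n) : ℂ)) atTop
        (𝓝 (inner ℂ (P.P E u) u)) := Filter.Tendsto.inner tendsto_const_nhds hxlim
    have huniq : (inner ℂ W flim : ℂ) = inner ℂ (P.P E u) u :=
      tendsto_nhds_unique (t1.congr hval) t2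
    rw [← hWinner flim (fun l => flim l) (ae_eq_refl _), huniq, k3 E hE]
  -- the density integrates correctly
  have hIII : ∀ E : Set Λ, MeasurableSet E →
      ∫ l in E, w l ∂μ = (((ν E).toReal : ℝ) : ℂ) := by
    intro E hE
    have h1 := hνint (fun _ => (1 : ℂ)) E hE
    simp only [mul_one] at h1
    rw [← h1, setIntegral_const]
    simp; rfl
  -- flim agrees a.e. with w
  have hwint : Integrable w μ :=
    Integrable.mono' (integrable_const 1) hwm.aestronglyMeasurable hw_bd
  have hflim_int : Integrable (fun l => flim l) μ :=
    (Lp.memLp flim).integrable (by norm_num)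
  have hae1 : (fun l => flim l) =ᵐ[μ] w := by
    apply ae_eq_of_forall_setIntegral_eq_of_sigmaFinite
    · exact fun s hs _ => hflim_int.integrableOn
    · exact fun s hs _ => hwint.integrableOn
    · intro s hs _
      rw [hI s hs, hIII s hs]
  -- w is a.e. idempotent
  have hsqae : (fun l => w l * w l) =ᵐ[μ] w := by
    apply ae_eq_of_forall_setIntegral_eq_of_sigmaFinite
    · intro s hs _
      refine (Integrable.mono' (integrable_const 1)
        (hwm.mul hwm).aestronglyMeasurable ?_).integrableOn
      filter_upwards [hw_bd] with l hl
      rw [Pi.mul_apply, norm_mul]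
      exact mul_le_one₀ hl (norm_nonneg _) hl
    · exact fun s hs _ => hwint.integrableOn
    · intro s hs _
      have h1 : ∫ l in s, w l * w l ∂μ = ∫ l in s, w l * flim l ∂μ := by
        apply setIntegral_congr_ae hs
        filter_upwards [hae1] with l hl _
        rw [hl]
      rw [h1, hII s hs, hIII s hs]
  -- φ' takes only the values 0 and 1 a.e.
  have hφ'01 : ∀ᵐ l ∂μ, φ' l = 1 ∨ φ' l = 0 := by
    filter_upwards [hsqae] with l hl
    have hr : ((φ' l : ℝ)) * ((φ' l : ℝ)) = ((φ' l : ℝ)) := by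
      have := hl
      simp only [hwdef] at this
      exact_mod_cast this
    rcases mul_eq_zero.mp (show ((φ' l : ℝ)) * (((φ' l : ℝ)) - 1) = 0 by
      linear_combination hr) with h | h
    · right; exact_mod_cast h
    · left
      have : ((φ' l : ℝ)) = 1 := by linarith
      exact_mod_cast this
  -- the candidate set
  set E₀ : Set Λ := φ' ⁻¹' {1} with hE₀def
  have hE₀ : MeasurableSet E₀ := hφ'm (measurableSet_singleton 1)
  -- ν is concentrated on E₀
  have hν0 : ν E₀ᶜ = 0 := by
    have hν01 : ∀ᵐ l ∂ν, φ' l = 1 ∨ φ' l = 0 := hac.ae_le hφ'01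
    have hzero : ν (φ' ⁻¹' {0}) = 0 := by
      rw [← hwd', withDensity_apply _ (hφ'm (measurableSet_singleton 0))]
      have hcongr : ∫⁻ l in φ' ⁻¹' {0}, ((φ' l : NNReal) : ENNReal) ∂μ
          = ∫⁻ _ in φ' ⁻¹' {0}, (0 : ENNReal) ∂μ :=
        setLIntegral_congr_fun_ae (hφ'm (measurableSet_singleton 0))
          (ae_of_all _ (fun l hl => by
            simp only [Set.mem_preimage, Set.mem_singleton_iff] at hl
            simp [hl]))
      rw [hcongr]
      simp
    have hbad : ν {l | ¬(φ' l = 1 ∨ φ' l = 0)} = 0 := ae_iff.mp hν01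
    have hsub : E₀ᶜ ⊆ (φ' ⁻¹' {0}) ∪ {l | ¬(φ' l = 1 ∨ φ' l = 0)} := by
      intro l hl
      simp only [hE₀def, Set.mem_compl_iff, Set.mem_preimage,
        Set.mem_singleton_iff] at hl
      by_cases h0 : φ' l = 0
      · exact Or.inl h0
      · exact Or.inr (by simp [hl, h0])
    refine le_antisymm ?_ (by simp)
    calc ν E₀ᶜ ≤ ν ((φ' ⁻¹' {0}) ∪ {l | ¬(φ' l = 1 ∨ φ' l = 0)}) := measure_mono hsub
      _ ≤ ν (φ' ⁻¹' {0}) + ν {l | ¬(φ' l = 1 ∨ φ' l = 0)} := measure_union_le _ _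
      _ = 0 := by rw [hzero, hbad, add_zero]
  -- on E₀ the two measures agree
  have hμνE₀ : μ E₀ = ν E₀ := by
    rw [← hwd', withDensity_apply _ hE₀]
    have hcongr : ∫⁻ l in E₀, ((φ' l : NNReal) : ENNReal) ∂μ
        = ∫⁻ _ in E₀, (1 : ENNReal) ∂μ :=
      setLIntegral_congr_fun_ae hE₀ (ae_of_all _ (fun l hl => by
        simp only [hE₀def, Set.mem_preimage, Set.mem_singleton_iff] at hl
        simp [hl]))
    rw [hcongr]
    simp
  -- the main vector identity: P(E₀) g = u
  have hfin : P.P E₀ g = u := by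
    have e1 : (inner ℂ (P.P E₀ g) (P.P E₀ g) : ℂ) = (((ν E₀).toReal : ℝ) : ℂ) := by
      rw [P.selfAdjoint E₀ g (P.P E₀ g), ← ContinuousLinearMap.comp_apply, P.idem E₀,
        P.inner_apply_self_right]
      rw [show ‖P.P E₀ g‖ ^ 2 = (ν E₀).toReal from by
        rw [← hμνE₀, hμdef]; exact (P.diag_apply_toReal g hE₀).symm]
    have e2 : (inner ℂ (P.P E₀ g) u : ℂ) = (((ν E₀).toReal : ℝ) : ℂ) := k1 E₀ hE₀
    have e3 : (inner ℂ u (P.P E₀ g) : ℂ) = (((ν E₀).toReal : ℝ) : ℂ) := by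
      rw [← inner_conj_symm, e2, Complex.conj_ofReal]
    have e4 : (inner ℂ u u : ℂ) = (((ν E₀).toReal : ℝ) : ℂ) := by
      have huniv : P.P Set.univ u = u := by rw [P.complete]; rfl
      have e5 : ν Set.univ = ν E₀ := by
        rw [← measure_add_measure_compl hE₀, hν0, add_zero]
      nth_rewrite 1 [← huniv]
      rw [k3 Set.univ MeasurableSet.univ, e5]
    have hinner : (inner ℂ (P.P E₀ g - u) (P.P E₀ g - u) : ℂ) = 0 := by
      rw [inner_sub_sub_self, e1, e2, e3, e4]
      ring
    exact sub_eq_zero.mp (inner_self_eq_zero.mp hinner)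
  -- conclude the operator identity by density
  refine ⟨E₀, hE₀, ?_⟩
  have hagree : ∀ z ∈ S, q z = P.P E₀ z := by
    rintro z ⟨E, hE, rfl⟩
    rw [← hq_comm E hE g, show q g = P.P E₀ g from hfin.symm,
      P.apply_inter hE hE₀, P.apply_inter hE₀ hE, Set.inter_comm]
  have hspan : ∀ z ∈ Submodule.span ℂ S, q z = P.P E₀ z := by
    intro z hz
    induction hz using Submodule.span_induction with
    | mem z hzS => exact hagree z hzS
    | zero => simp
    | add a b _ _ ha hb => rw [map_add, map_add, ha, hb]
    | smul c a _ ha => rw [ContinuousLinearMap.map_smul, ContinuousLinearMap.map_smul, ha]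
  have hclosed : IsClosed {z : H | q z = P.P E₀ z} :=
    isClosed_eq q.continuous (P.P E₀).continuous
  have hsubset : closure ((Submodule.span ℂ S : Submodule ℂ H) : Set H)
      ⊆ {z : H | q z = P.P E₀ z} := closure_minimal hspan hclosed
  ext y
  have hy : y ∈ closure ((Submodule.span ℂ S : Submodule ℂ H) : Set H) := by
    rw [← Submodule.topologicalClosure_coe, hsimple']
    trivial
  exact hsubset hy
end
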